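/- arXiv:2412.12640 — 2 statements merged into one kernel-verified Lean document; each statement's English description precedes it below -/
import Mathlib

section
/- (Theorem 2) Consider a Conv–ReLU stack whose k-th output is a scalar: let W_k : Fin C × Fin H_k × Fin W_k → ℝ be the k-th kernel, X : Fin C × ℕ × ℕ → ℝ the input, Z_k = Σ_{c,h,w} W_k(c,h,w) · X(c,h,w) the scalar convolution output, and A_k = max(0, Z_k) the ReLU activation. Let ∇A_k ∈ ℝ be the upstream gradient, define ∇Z_k = ∇A_k if Z_k > 0 and 0 otherwise, and define the kernel gradient ∇W_k(c,h,w) = ∇Z_k · X(c,h,w). If A_k ≠ 0, then ∇A_k = ⟨∇W_k, W_k⟩_F / A_k, where ⟨∇W_k, W_k⟩_F = Σ_{c,h,w} ∇W_k(c,h,w) · W_k(c,h,w) is the Frobenius inner product. -/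
/-! Since `A ≠ 0`, the ReLU is active: `Z > 0`, so `A = Z` and `∇Z = ∇A`. The output `Z` is
linear in the kernel `W`, so by Euler's identity `⟨∇W, W⟩_F = ∇Z · Z = ∇A · A`. -/

lemma pos_of_max_zero_ne_zero {z : ℝ} (h : max 0 z ≠ 0) : 0 < z :=
  (lt_max_iff.mp ((le_max_left 0 z).lt_of_ne' h)).resolve_left (lt_irrefl 0)

/-- Theorem 2: in a Conv–ReLU stack whose `k`-th output is a scalar
`Z = ∑ c h w, W (c,h,w) * X (c,h,w)` with ReLU activation `A = max 0 Z`,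
upstream gradient `∇A`, `∇Z = ∇A · 1[Z > 0]` and kernel gradient
`∇W (c,h,w) = ∇Z * X (c,h,w)`, if `A ≠ 0` then `∇A = ⟨∇W, W⟩_F / A`. -/
theorem conv_relu_gA (C Hk Wk : ℕ)
    (W : Fin C × Fin Hk × Fin Wk → ℝ) (X : Fin C × ℕ × ℕ → ℝ)
    (Z : ℝ)
    (hZ : Z = ∑ c : Fin C, ∑ h : Fin Hk, ∑ w : Fin Wk,
      W (c, h, w) * X (c, (h : ℕ), (w : ℕ)))
    (A : ℝ) (hA : A = max 0 Z)
    (gA gZ : ℝ) (hgZ : gZ = if 0 < Z then gA else 0)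
    (gW : Fin C × Fin Hk × Fin Wk → ℝ)
    (hgW : ∀ (c : Fin C) (h : Fin Hk) (w : Fin Wk),
      gW (c, h, w) = gZ * X (c, (h : ℕ), (w : ℕ)))
    (hAne : A ≠ 0) :
    gA = (∑ c : Fin C, ∑ h : Fin Hk, ∑ w : Fin Wk, gW (c, h, w) * W (c, h, w)) / A := by
  have hZpos : 0 < Z := pos_of_max_zero_ne_zero (hA ▸ hAne)
  have hAZ : A = Z := hA.trans (max_eq_right hZpos.le)
  have hgZA : gZ = gA := by rw [hgZ, if_pos hZpos]
  have hfrob : ∑ c : Fin C, ∑ h : Fin Hk, ∑ w : Fin Wk, gW (c, h, w) * W (c, h, w) = gZ * Z := by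
    simp only [hZ, Finset.mul_sum, hgW, mul_comm (W _), mul_assoc]
  rw [hfrob, hgZA, ← hAZ, mul_div_cancel_right₀ _ hAne]
end

section
/- (Batch-averaged FC–ReLU gradient, first-stack FC case) Let W be an N×M real matrix, and for n = 1,…,B let x^(n) ∈ ℝ^M, z^(n) = W x^(n), and a^(n) the ReLU output with a^(n)_k = max(0, z^(n)_k). Let ∇a^(n) ∈ ℝ^N be upstream gradients, define ∇z^(n) by (∇z^(n))_k = (∇a^(n))_k if z^(n)_k > 0 and 0 otherwise, and define the per-sample weight gradients ∇W^(n) = ∇z^(n) (x^(n))ᵀ. Suppose there is a common vector ã ∈ ℝ^N with every entry nonzero such that a^(n) = ã for all n. Then the batch-averaged activation gradient (1/B) Σ_n ∇a^(n) has k-th entry equal to ( (1/B) Σ_n (∇W^(n) Wᵀ)_{kk} ) / ã_k; equivalently, writing ∇W̄ = (1/B) Σ_n ∇W^(n), the averaged gradient equals diag(∇W̄ Wᵀ) divided element-wise by ã. -/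
open Matrix

/-- Batch-averaged FC–ReLU gradient (first-stack FC case). For a batch of `B`
samples through an FC–ReLU stack with `z^(n) = W x^(n)`, `a^(n) = ReLU z^(n)`,
ReLU-backpropagated gradients `(∇z^(n))_k = (∇a^(n))_k · 1[z^(n)_k > 0]` and
per-sample weight gradients `∇W^(n) = ∇z^(n) (x^(n))ᵀ`, if all activations equal
a common vector `ã` with nonzero entries, then the batch-averaged activation
gradient has `k`-th entry `((1/B) ∑ n, (∇W^(n) Wᵀ)_{kk}) / ã_k`. -/
theorem batch_fc_relu_gradient (N M B : ℕ) (W : Matrix (Fin N) (Fin M) ℝ)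
    (x : Fin B → Fin M → ℝ) (z : Fin B → Fin N → ℝ)
    (hz : ∀ n, z n = W.mulVec (x n))
    (a : Fin B → Fin N → ℝ) (ha : ∀ n k, a n k = max 0 (z n k))
    (ga gz : Fin B → Fin N → ℝ)
    (hgz : ∀ n k, gz n k = if 0 < z n k then ga n k else 0)
    (gW : Fin B → Matrix (Fin N) (Fin M) ℝ)
    (hgW : ∀ n, gW n = Matrix.vecMulVec (gz n) (x n))
    (atil : Fin N → ℝ) (hatil : ∀ k, atil k ≠ 0)
    (hcommon : ∀ n, a n = atil) :
    ∀ k, (B : ℝ)⁻¹ * ∑ n, ga n k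
      = ((B : ℝ)⁻¹ * ∑ n, (gW n * Wᵀ) k k) / atil k := by
  intro k
  have hzpos : ∀ n, 0 < z n k ∧ z n k = atil k := by
    intro n
    have h1 : max 0 (z n k) = atil k := by rw [← ha, hcommon]
    have hne := hatil k
    rcases le_or_gt (z n k) 0 with h | h
    · exfalso; apply hne; rw [← h1, max_eq_left h]
    · exact ⟨h, by rw [← h1, max_eq_right h.le]⟩
  have key : ∀ n, (gW n * Wᵀ) k k = ga n k * atil k := by
    intro n
    have hpos := (hzpos n).1
    have hdiag : (gW n * Wᵀ) k k = gz n k * z n k := by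
      simp only [hgW, hz, Matrix.mul_apply, Matrix.vecMulVec_apply,
        Matrix.transpose_apply, Matrix.mulVec, dotProduct,
        Finset.mul_sum]
      congr 1; ext j; ring
    rw [hdiag, hgz, if_pos hpos, (hzpos n).2]
  simp only [key, ← Finset.sum_mul]
  rw [← mul_assoc, mul_div_assoc, div_self (hatil k), mul_one]
end
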